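/- Let a₁, a₂ > 0, let a₃ be real, let b₁, b₂ be reals that are not non-positive integers, and let x be real with |x| < 1. Then ₃F₂(a₁, a₂, a₃; b₁, b₂; x) = (1/(Γ(a₁)Γ(a₂))) ∫₀^∞ ∫₀^∞ e^{−t−y} t^{a₁−1} y^{a₂−1} · ₁F₂(a₃; b₁, b₂; x·t·y) dt dy, with the double integral absolutely convergent. -/

import Mathlib

open scoped BigOperators

/-- The (rising) Pochhammer symbol `(a)_n` for a real number `a`. -/
noncomputable def poch (a : ℝ) (n : ℕ) : ℝ := (ascPochhammer ℝ n).eval a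

/-- The generalized hypergeometric series `₃F₂(a₁,a₂,a₃; b₁,b₂; x)`. -/
noncomputable def F32 (a₁ a₂ a₃ b₁ b₂ x : ℝ) : ℝ :=
  ∑' n : ℕ, (poch a₁ n * poch a₂ n * poch a₃ n) /
      (poch b₁ n * poch b₂ n * (n.factorial : ℝ)) * x ^ n

/-- The hypergeometric series `₁F₂(a; b, c; x)`. -/
noncomputable def F12 (a b c x : ℝ) : ℝ :=
  ∑' n : ℕ, poch a n / (poch b n * poch c n * (n.factorial : ℝ)) * x ^ n

open MeasureTheory Set Filter
open scoped ENNReal NNReal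

lemma measurable_rpow_const (a : ℝ) : Measurable fun t : ℝ => t ^ a := by measurability



lemma poch_zero (a : ℝ) : poch a 0 = 1 := by simp [poch]

lemma poch_succ (a : ℝ) (n : ℕ) : poch a (n + 1) = poch a n * (a + n) := by
  simpa [poch] using ascPochhammer_succ_eval (S := ℝ) n a

lemma poch_pos {a : ℝ} (ha : 0 < a) (n : ℕ) : 0 < poch a n :=
  ascPochhammer_pos n a ha

lemma add_nat_ne_zero {b : ℝ} (hb : ∀ m : ℕ, b ≠ -(m : ℝ)) (n : ℕ) : b + n ≠ 0 := by
  intro h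
  exact hb n (by linarith)

lemma poch_ne_zero {b : ℝ} (hb : ∀ m : ℕ, b ≠ -(m : ℝ)) (n : ℕ) : poch b n ≠ 0 := by
  induction n with
  | zero => simp [poch]
  | succ n ih => rw [poch_succ]; exact mul_ne_zero ih (add_nat_ne_zero hb n)

lemma Gamma_add_nat {a : ℝ} (ha : 0 < a) (n : ℕ) :
    Real.Gamma (a + n) = Real.Gamma a * poch a n := by
  induction n with
  | zero => simp [poch_zero]
  | succ n ih =>
    have h : a + (n : ℝ) ≠ 0 := by positivity
    have h2 : a + ((n : ℕ) + 1 : ℕ) = (a + n) + 1 := by push_cast; ring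
    rw [h2, Real.Gamma_add_one h, ih, poch_succ]
    ring

lemma tendsto_ratio (a b : ℝ) :
    Tendsto (fun n : ℕ => (a + n) / (b + n)) atTop (nhds 1) := by
  have hb : Tendsto (fun n : ℕ => b + (n : ℝ)) atTop atTop :=
    tendsto_atTop_add_const_left _ b tendsto_natCast_atTop_atTop
  have h0 : Tendsto (fun n : ℕ => (a - b) / (b + (n : ℝ))) atTop (nhds 0) :=
    Tendsto.div_atTop tendsto_const_nhds hb
  have h1 : Tendsto (fun n : ℕ => 1 + (a - b) / (b + (n : ℝ))) atTop (nhds 1) := by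
    simpa using h0.const_add 1
  refine h1.congr' ?_
  filter_upwards [hb.eventually_gt_atTop 0] with n hn
  field_simp
  ring

lemma summable_abs_of_ratio {u R : ℕ → ℝ} {L : ℝ} (hL : |L| < 1)
    (h : ∀ n, u (n + 1) = u n * R n) (hR : Tendsto R atTop (nhds L)) :
    Summable fun n => |u n| := by
  have hr : (|L| + 1) / 2 < 1 := by linarith
  refine summable_of_ratio_norm_eventually_le hr ?_
  have habs : Tendsto (fun n => |R n|) atTop (nhds |L|) := hR.abs
  filter_upwards [habs.eventually_le_const (by linarith : |L| < (|L| + 1) / 2)] with n hn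
  rw [Real.norm_eq_abs, Real.norm_eq_abs, abs_abs, abs_abs, h n, abs_mul, mul_comm]
  exact mul_le_mul_of_nonneg_right hn (abs_nonneg _)

lemma summable_T {a₁ a₂ a₃ b₁ b₂ x : ℝ}
    (hb₁ : ∀ m : ℕ, b₁ ≠ -(m : ℝ)) (hb₂ : ∀ m : ℕ, b₂ ≠ -(m : ℝ)) (hx : |x| < 1) :
    Summable fun n => |poch a₁ n * poch a₂ n * poch a₃ n /
        (poch b₁ n * poch b₂ n * (n.factorial : ℝ)) * x ^ n| := by
  refine summable_abs_of_ratio (L := x)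
    (R := fun n => x * ((a₁ + n) / (b₁ + n)) * ((a₂ + n) / (b₂ + n)) * ((a₃ + n) / (1 + n)))
    hx ?_ ?_
  · intro n
    have h1 := poch_ne_zero hb₁ n
    have h2 := poch_ne_zero hb₂ n
    have hd1 := add_nat_ne_zero hb₁ n
    have hd2 := add_nat_ne_zero hb₂ n
    have hfac : ((n.factorial : ℝ)) ≠ 0 := by positivity
    have hn1 : (1 : ℝ) + n ≠ 0 := by positivity
    rw [poch_succ, poch_succ, poch_succ, poch_succ, poch_succ, pow_succ]
    push_cast [Nat.factorial_succ]
    field_simp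
    ring
  · have := (((tendsto_const_nhds (x := x) (f := atTop (α := ℕ))).mul
      (tendsto_ratio a₁ b₁)).mul (tendsto_ratio a₂ b₂)).mul (tendsto_ratio a₃ 1)
    exact by simpa only [mul_one] using this

lemma summable_F12 {a₃ b₁ b₂ : ℝ}
    (hb₁ : ∀ m : ℕ, b₁ ≠ -(m : ℝ)) (hb₂ : ∀ m : ℕ, b₂ ≠ -(m : ℝ)) (z : ℝ) :
    Summable fun n => |poch a₃ n / (poch b₁ n * poch b₂ n * (n.factorial : ℝ)) * z ^ n| := by
  refine summable_abs_of_ratio (L := 0)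
    (R := fun n => z * ((a₃ + n) / (b₁ + n)) * (1 / ((b₂ + n) * (1 + n))))
    (by norm_num) ?_ ?_
  · intro n
    have h1 := poch_ne_zero hb₁ n
    have h2 := poch_ne_zero hb₂ n
    have hd1 := add_nat_ne_zero hb₁ n
    have hd2 := add_nat_ne_zero hb₂ n
    have hfac : ((n.factorial : ℝ)) ≠ 0 := by positivity
    have hn1 : (1 : ℝ) + n ≠ 0 := by positivity
    rw [poch_succ, poch_succ, poch_succ, pow_succ]
    push_cast [Nat.factorial_succ]
    field_simp
    ring
  · have hb2 : Tendsto (fun n : ℕ => (b₂ + (n : ℝ)) * (1 + n)) atTop atTop :=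
      (tendsto_atTop_add_const_left _ b₂ tendsto_natCast_atTop_atTop).atTop_mul_atTop₀
        (tendsto_atTop_add_const_left _ 1 tendsto_natCast_atTop_atTop)
    have := ((tendsto_const_nhds (x := z) (f := atTop (α := ℕ))).mul
      (tendsto_ratio a₃ b₁)).mul (Tendsto.div_atTop (tendsto_const_nhds (x := (1:ℝ)) (f := atTop (α := ℕ))) hb2)
    exact by simpa only [mul_one, mul_zero] using this


/-- Double Laplace-type integral representation of `₃F₂` in terms of `₁F₂`, with the
double integral absolutely convergent. -/
theorem stmt14 (a₁ a₂ a₃ b₁ b₂ x : ℝ) (ha₁ : 0 < a₁) (ha₂ : 0 < a₂)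
    (hb₁ : ∀ n : ℕ, b₁ ≠ -(n : ℝ)) (hb₂ : ∀ n : ℕ, b₂ ≠ -(n : ℝ))
    (hx : |x| < 1) :
    MeasureTheory.IntegrableOn
      (fun q : ℝ × ℝ =>
        Real.exp (-q.1 - q.2) * q.1 ^ (a₁ - 1) * q.2 ^ (a₂ - 1) *
          F12 a₃ b₁ b₂ (x * q.1 * q.2))
      (Set.Ioi (0 : ℝ) ×ˢ Set.Ioi (0 : ℝ)) ∧
    F32 a₁ a₂ a₃ b₁ b₂ x =
      1 / (Real.Gamma a₁ * Real.Gamma a₂) *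
        ∫ t in Set.Ioi (0 : ℝ), ∫ y in Set.Ioi (0 : ℝ),
          Real.exp (-t - y) * t ^ (a₁ - 1) * y ^ (a₂ - 1) * F12 a₃ b₁ b₂ (x * t * y) := by
  have hΓ₁ := Real.Gamma_pos_of_pos ha₁
  have hΓ₂ := Real.Gamma_pos_of_pos ha₂
  set S : Set (ℝ × ℝ) := Set.Ioi (0 : ℝ) ×ˢ Set.Ioi (0 : ℝ) with hS
  have hSm : MeasurableSet S := measurableSet_Ioi.prod measurableSet_Ioi
  set c : ℕ → ℝ := fun n => poch a₃ n / (poch b₁ n * poch b₂ n * (n.factorial : ℝ)) with hc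
  set f : ℕ → ℝ × ℝ → ℝ := fun n q =>
    Real.exp (-q.1 - q.2) * q.1 ^ (a₁ - 1) * q.2 ^ (a₂ - 1) *
      (c n * (x * q.1 * q.2) ^ n) with hf
  -- pointwise identity
  have hpt : ∀ q : ℝ × ℝ,
      Real.exp (-q.1 - q.2) * q.1 ^ (a₁ - 1) * q.2 ^ (a₂ - 1) * F12 a₃ b₁ b₂ (x * q.1 * q.2)
        = ∑' n, f n q := by
    intro q
    simp only [F12, hf, hc]
    exact tsum_mul_left.symm
  -- product form on S
  have hfS : ∀ (n : ℕ) (q : ℝ × ℝ), q ∈ S → f n q =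
      (c n * x ^ n * (Real.exp (-q.1) * q.1 ^ (a₁ + n - 1))) *
        (Real.exp (-q.2) * q.2 ^ (a₂ + n - 1)) := by
    rintro n ⟨t, y⟩ ⟨ht, hy⟩
    have ht' : (0 : ℝ) < t := ht
    have hy' : (0 : ℝ) < y := hy
    have h1 : t ^ (a₁ - 1) * t ^ n = t ^ (a₁ + n - 1) := by
      rw [← Real.rpow_natCast t n, ← Real.rpow_add ht']
      ring_nf
    have h2 : y ^ (a₂ - 1) * y ^ n = y ^ (a₂ + n - 1) := by
      rw [← Real.rpow_natCast y n, ← Real.rpow_add hy']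
      ring_nf
    have hexp : Real.exp (-t - y) = Real.exp (-t) * Real.exp (-y) := by
      rw [← Real.exp_add]; ring_nf
    simp only [hf]
    rw [← h1, ← h2, hexp, mul_pow, mul_pow]
    ring
  -- Gamma integrals
  have hIg : ∀ (a : ℝ), 0 < a → ∀ n : ℕ,
      IntegrableOn (fun t : ℝ => Real.exp (-t) * t ^ (a + n - 1)) (Set.Ioi 0) :=
    fun a ha n => Real.GammaIntegral_convergent (by positivity)
  have hIgval : ∀ (a : ℝ), 0 < a → ∀ n : ℕ,
      ∫ t in Set.Ioi (0 : ℝ), Real.exp (-t) * t ^ (a + n - 1) = Real.Gamma (a + n) :=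
    fun a ha n => (Real.Gamma_eq_integral (by positivity)).symm
  have hmeq : (volume.restrict (Set.Ioi (0 : ℝ))).prod (volume.restrict (Set.Ioi (0 : ℝ)))
      = (volume : Measure (ℝ × ℝ)).restrict S := by
    rw [Measure.prod_restrict, ← Measure.volume_eq_prod]
  -- integrability of each term
  have hInt : ∀ n : ℕ, Integrable (f n) (volume.restrict S) := by
    intro n
    rw [← hmeq]
    have hprod : Integrable (fun q : ℝ × ℝ =>
        (c n * x ^ n * (Real.exp (-q.1) * q.1 ^ (a₁ + n - 1))) *
          (Real.exp (-q.2) * q.2 ^ (a₂ + n - 1)))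
        ((volume.restrict (Set.Ioi (0 : ℝ))).prod (volume.restrict (Set.Ioi (0 : ℝ)))) :=
      ((hIg a₁ ha₁ n).const_mul _).mul_prod (hIg a₂ ha₂ n)
    refine hprod.congr ?_
    rw [hmeq]
    filter_upwards [ae_restrict_mem hSm] with q hq
    exact (hfS n q hq).symm
  -- value of the integrals
  have hval : ∀ n : ℕ, ∫ q, f n q ∂(volume.restrict S)
      = c n * x ^ n * Real.Gamma (a₁ + n) * Real.Gamma (a₂ + n) := by
    intro n
    have h1 : ∫ q in S, f n q = ∫ q in S,
        (c n * x ^ n * (Real.exp (-q.1) * q.1 ^ (a₁ + n - 1))) *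
          (Real.exp (-q.2) * q.2 ^ (a₂ + n - 1)) :=
      setIntegral_congr_fun hSm (hfS n)
    rw [h1, hS, Measure.volume_eq_prod,
      setIntegral_prod_mul (fun t => c n * x ^ n * (Real.exp (-t) * t ^ (a₁ + (n : ℝ) - 1)))
        (fun y => Real.exp (-y) * y ^ (a₂ + (n : ℝ) - 1)) (Set.Ioi 0) (Set.Ioi 0),
      integral_const_mul, hIgval a₁ ha₁ n, hIgval a₂ ha₂ n]
  have hnormval : ∀ n : ℕ, ∫ q, ‖f n q‖ ∂(volume.restrict S)
      = |c n * x ^ n| * Real.Gamma (a₁ + n) * Real.Gamma (a₂ + n) := by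
    intro n
    have heq : ∀ q ∈ S, ‖f n q‖ =
        (|c n * x ^ n| * (Real.exp (-q.1) * q.1 ^ (a₁ + n - 1))) *
          (Real.exp (-q.2) * q.2 ^ (a₂ + n - 1)) := by
      rintro ⟨t, y⟩ ⟨ht, hy⟩
      have ht' : (0 : ℝ) < t := ht
      have hy' : (0 : ℝ) < y := hy
      have hg1 : 0 < Real.exp (-t) * t ^ (a₁ + n - 1) := by positivity
      have hg2 : 0 < Real.exp (-y) * y ^ (a₂ + n - 1) := by positivity
      rw [Real.norm_eq_abs, hfS n (t, y) ⟨ht, hy⟩, abs_mul, abs_mul, abs_of_pos hg1,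
        abs_of_pos hg2]
    have h1 : ∫ q in S, ‖f n q‖ = ∫ q in S,
        (|c n * x ^ n| * (Real.exp (-q.1) * q.1 ^ (a₁ + n - 1))) *
          (Real.exp (-q.2) * q.2 ^ (a₂ + n - 1)) :=
      setIntegral_congr_fun hSm heq
    rw [h1, hS, Measure.volume_eq_prod,
      setIntegral_prod_mul (fun t => |c n * x ^ n| * (Real.exp (-t) * t ^ (a₁ + (n : ℝ) - 1)))
        (fun y => Real.exp (-y) * y ^ (a₂ + (n : ℝ) - 1)) (Set.Ioi 0) (Set.Ioi 0),
      integral_const_mul, hIgval a₁ ha₁ n, hIgval a₂ ha₂ n]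
  -- the 3F2 terms
  set T : ℕ → ℝ := fun n => poch a₁ n * poch a₂ n * poch a₃ n /
      (poch b₁ n * poch b₂ n * (n.factorial : ℝ)) * x ^ n with hT
  have hTsum : Summable fun n => |T n| := summable_T hb₁ hb₂ hx
  have hTc : ∀ n : ℕ, c n * x ^ n * Real.Gamma (a₁ + n) * Real.Gamma (a₂ + n)
      = Real.Gamma a₁ * Real.Gamma a₂ * T n := by
    intro n
    rw [Gamma_add_nat ha₁ n, Gamma_add_nat ha₂ n]
    simp only [hT, hc]
    ring
  have habs : ∀ n : ℕ, |c n * x ^ n| * Real.Gamma (a₁ + n) * Real.Gamma (a₂ + n)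
      = Real.Gamma a₁ * Real.Gamma a₂ * |T n| := by
    intro n
    have hp1 := poch_pos ha₁ n
    have hp2 := poch_pos ha₂ n
    have hTn : T n = poch a₁ n * poch a₂ n * (c n * x ^ n) := by
      simp only [hT, hc]; ring
    rw [Gamma_add_nat ha₁ n, Gamma_add_nat ha₂ n]
    simp only [hTn, abs_mul, abs_of_pos hp1, abs_of_pos hp2]
    ring
  have hnorm_summable : Summable fun n => ∫ q, ‖f n q‖ ∂(volume.restrict S) := by
    refine Summable.congr (hTsum.mul_left (Real.Gamma a₁ * Real.Gamma a₂)) fun n => ?_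
    rw [hnormval n, habs n]
  -- interchange of sum and integral
  have hkey : ∑' n, ∫ q, f n q ∂(volume.restrict S)
      = ∫ q, (∑' n, f n q) ∂(volume.restrict S) :=
    integral_tsum_of_summable_integral_norm hInt hnorm_summable
  -- pointwise summability and measurability
  have hsum_pt : ∀ q : ℝ × ℝ, Summable fun n => f n q := by
    intro q
    have h := (summable_F12 (a₃ := a₃) hb₁ hb₂ (x * q.1 * q.2)).of_abs
    exact h.mul_left _
  have hrp1 : Measurable fun t : ℝ => t ^ (a₁ - 1) := measurable_rpow_const _
  have hrp2 : Measurable fun t : ℝ => t ^ (a₂ - 1) := measurable_rpow_const _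
  have hmeasf : ∀ n : ℕ, Measurable (f n) := by
    intro n
    simp only [hf]
    exact ((((measurable_fst.neg.sub measurable_snd).exp).mul (hrp1.comp measurable_fst)).mul
      (hrp2.comp measurable_snd)).mul
      (measurable_const.mul
        (((measurable_const.mul measurable_fst).mul measurable_snd).pow_const n))
  have hmeasg : Measurable fun q : ℝ × ℝ => ∑' n, f n q := by
    refine measurable_of_tendsto_metrizable
      (f := fun N q => ∑ n ∈ Finset.range N, f n q) (fun N => ?_) ?_
    · exact Finset.measurable_sum _ fun n _ => hmeasf n
    · rw [tendsto_pi_nhds]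
      intro q
      exact (hsum_pt q).hasSum.tendsto_sum_nat
  have habs_pt : ∀ q : ℝ × ℝ, Summable fun n => ‖f n q‖₊ := by
    intro q
    rw [← NNReal.summable_coe]
    have h := (summable_F12 (a₃ := a₃) hb₁ hb₂ (x * q.1 * q.2)).mul_left
      |Real.exp (-q.1 - q.2) * q.1 ^ (a₁ - 1) * q.2 ^ (a₂ - 1)|
    refine h.congr fun n => ?_
    simp only [coe_nnnorm, Real.norm_eq_abs, hf, hc]
    exact (abs_mul _ _).symm
  have hfin : HasFiniteIntegral (fun q : ℝ × ℝ => ∑' n, f n q) (volume.restrict S) := by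
    have hle : (∫⁻ q, (‖∑' n, f n q‖₊ : ℝ≥0∞) ∂(volume.restrict S))
        ≤ ∑' n, ∫⁻ q, (‖f n q‖₊ : ℝ≥0∞) ∂(volume.restrict S) := by
      rw [← lintegral_tsum fun n => (hmeasf n).nnnorm.coe_nnreal_ennreal.aemeasurable]
      refine lintegral_mono fun q => ?_
      calc (‖∑' n, f n q‖₊ : ℝ≥0∞)
          ≤ ((∑' n, ‖f n q‖₊ : ℝ≥0) : ℝ≥0∞) := ENNReal.coe_le_coe.2 (nnnorm_tsum_le (habs_pt q))
        _ = ∑' n, (‖f n q‖₊ : ℝ≥0∞) := ENNReal.coe_tsum (habs_pt q)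
    have hlt : (∑' n, ∫⁻ q, (‖f n q‖₊ : ℝ≥0∞) ∂(volume.restrict S)) < ⊤ := by
      calc (∑' n, ∫⁻ q, (‖f n q‖₊ : ℝ≥0∞) ∂(volume.restrict S))
          = ∑' n, ENNReal.ofReal (∫ q, ‖f n q‖ ∂(volume.restrict S)) :=
            tsum_congr fun n => (ofReal_integral_norm_eq_lintegral_enorm (hInt n)).symm
        _ = ENNReal.ofReal (∑' n, ∫ q, ‖f n q‖ ∂(volume.restrict S)) :=
            (ENNReal.ofReal_tsum_of_nonneg
              (fun n => integral_nonneg fun q => norm_nonneg _) hnorm_summable).symm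
        _ < ⊤ := ENNReal.ofReal_lt_top
    exact lt_of_le_of_lt hle hlt
  -- integrability of the full integrand
  have hintg : IntegrableOn (fun q : ℝ × ℝ =>
      Real.exp (-q.1 - q.2) * q.1 ^ (a₁ - 1) * q.2 ^ (a₂ - 1) *
        F12 a₃ b₁ b₂ (x * q.1 * q.2)) S := by
    rw [IntegrableOn, funext hpt]
    exact ⟨hmeasg.aestronglyMeasurable, hfin⟩
  refine ⟨hintg, ?_⟩
  -- iterated integral equals the product integral
  have hint_prod : Integrable (Function.uncurry fun t y : ℝ =>
      Real.exp (-t - y) * t ^ (a₁ - 1) * y ^ (a₂ - 1) * F12 a₃ b₁ b₂ (x * t * y))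
      ((volume.restrict (Set.Ioi (0 : ℝ))).prod (volume.restrict (Set.Ioi (0 : ℝ)))) := by
    rw [hmeq]
    exact hintg
  have hiter := integral_integral hint_prod
  rw [hmeq] at hiter
  -- main computation
  have hF32 : Real.Gamma a₁ * Real.Gamma a₂ * F32 a₁ a₂ a₃ b₁ b₂ x
      = ∫ q, (∑' n, f n q) ∂(volume.restrict S) := by
    rw [← hkey]
    simp only [F32]
    rw [← tsum_mul_left]
    refine tsum_congr fun n => ?_
    rw [hval n, hTc n]
  have hfinal : ∫ t in Set.Ioi (0 : ℝ), ∫ y in Set.Ioi (0 : ℝ),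
      Real.exp (-t - y) * t ^ (a₁ - 1) * y ^ (a₂ - 1) * F12 a₃ b₁ b₂ (x * t * y)
      = Real.Gamma a₁ * Real.Gamma a₂ * F32 a₁ a₂ a₃ b₁ b₂ x := by
    rw [hF32, hiter]
    exact setIntegral_congr_fun hSm fun q _ => hpt q
  rw [hfinal]
  field_simp
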